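/- For all integers n ≥ 1 and l ≥ 1, the element (Σ_{i=1}^n u_i z_i^{n−1})^{l+1} of ℂ[u₁, …, u_n, z₁, …, z_n] lies in the ideal generated by u₁^{l+1}, …, u_n^{l+1} together with the elementary symmetric polynomials e₁(z₁, …, z_n), …, e_n(z₁, …, z_n). (Equivalently, in the quotient ring ℂ[u, z]/(u₁^{l+1}, …, u_n^{l+1}), the element ft^{n−1} = Σ_i u_i z_i^{n−1} satisfies (ft^{n−1})^{l+1} ∈ (ℂ[z₁, …, z_n]_+^{S_n}), the ideal generated by symmetric polynomials in the z's with zero constant term.) -/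

import Mathlib

/-!
Modulo `u_i^{l+1}` and `e_1(z), …, e_n(z)` the `z_i` satisfy `∏ i, (X - z_i) = X^n`. Evaluating at
`z_i` gives `z_i^n = 0`; dividing by `X - z_i` then gives `∏_{j ≠ i} (X - z_j) = ∑_a X^a z_i^{n-1-a}`,
and evaluating this at `z_j` (`j ≠ i`) and multiplying by `z_i^{n-1}` leaves only
`z_j^{n-1} z_i^{n-1} = 0`. So the summands `u_i z_i^{n-1}` are pairwise orthogonal, the `(l+1)`-st
power of their sum is the sum of their `(l+1)`-st powers, and each of those vanishes.
-/

open scoped BigOperators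
open MvPolynomial

/-- The `k`-th elementary symmetric polynomial in the variables `z₁, …, z_n`, viewed
inside `ℂ[u₁, …, u_n, z₁, …, z_n]` (with `u i = X (inl i)`, `z i = X (inr i)`). -/
noncomputable def esymmZ (n : ℕ) (k : ℕ) : MvPolynomial (Fin n ⊕ Fin n) ℂ :=
  MvPolynomial.rename (Sum.inr : Fin n → Fin n ⊕ Fin n) (MvPolynomial.esymm (Fin n) ℂ k)

theorem add_pow_succ_of_mul_eq_zero {A : Type*} [CommSemiring A] {x y : A} (h : x * y = 0)
    (m : ℕ) : (x + y) ^ (m + 1) = x ^ (m + 1) + y ^ (m + 1) := by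
  induction m with
  | zero => simp
  | succ m ih =>
    have hxy : x ^ (m + 1) * y = 0 := by rw [pow_succ, mul_assoc, h, mul_zero]
    have hyx : y ^ (m + 1) * x = 0 := by rw [pow_succ, mul_assoc, mul_comm y, h, mul_zero]
    calc (x + y) ^ (m + 1 + 1) = (x ^ (m + 1) + y ^ (m + 1)) * (x + y) := by rw [pow_succ, ih]
      _ = x ^ (m + 1 + 1) + y ^ (m + 1 + 1) + (x ^ (m + 1) * y + y ^ (m + 1) * x) := by ring
      _ = x ^ (m + 1 + 1) + y ^ (m + 1 + 1) := by rw [hxy, hyx, add_zero, add_zero]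

theorem Finset.sum_pow_succ_of_pairwise_mul_eq_zero {A ι : Type*} [CommSemiring A]
    {s : Finset ι} {a : ι → A} (h : (s : Set ι).Pairwise fun i j => a i * a j = 0) (m : ℕ) :
    (∑ i ∈ s, a i) ^ (m + 1) = ∑ i ∈ s, a i ^ (m + 1) := by
  induction s using Finset.cons_induction with
  | empty => simp
  | cons i s hi ih =>
    rw [Finset.coe_cons, Set.pairwise_insert] at h
    have hortho : a i * ∑ j ∈ s, a j = 0 :=
      Finset.mul_sum s a (a i) ▸ Finset.sum_eq_zero fun j hj =>
        (h.2 j hj fun hij => hi (hij ▸ hj)).1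
    rw [Finset.sum_cons, Finset.sum_cons, add_pow_succ_of_mul_eq_zero hortho, ih h.1]

namespace Polynomial

variable {A : Type*} [CommRing A]

theorem prod_X_sub_C_eq_X_pow_of_esymm_eq_zero (s : Multiset A)
    (hs : ∀ k, 1 ≤ k → k ≤ Multiset.card s → s.esymm k = 0) :
    (s.map fun t => X - C t).prod = X ^ Multiset.card s := by
  rw [Multiset.prod_X_sub_X_eq_sum_esymm, Finset.sum_eq_single 0]
  · simp [Multiset.esymm]
  · intro k hk hk0
    rw [hs k (Nat.one_le_iff_ne_zero.2 hk0) (Nat.lt_succ_iff.1 (Finset.mem_range.1 hk)),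
      C_0, zero_mul, mul_zero]
  · simp

variable {ι : Type*} [Fintype ι] {z : ι → A}

theorem pow_card_eq_zero_of_prod_X_sub_C_eq_X_pow
    (hz : ∏ i, (X - C (z i)) = X ^ Fintype.card ι) (i : ι) : z i ^ Fintype.card ι = 0 := by
  simpa [eval_prod, Finset.prod_eq_zero (Finset.mem_univ i)] using
    (congrArg (eval (z i)) hz).symm

theorem prod_erase_X_sub_C_eq_geom_sum_of_prod_X_sub_C_eq_X_pow [DecidableEq ι]
    (hz : ∏ i, (X - C (z i)) = X ^ Fintype.card ι) (i : ι) :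
    ∏ j ∈ Finset.univ.erase i, (X - C (z j)) =
      ∑ a ∈ Finset.range (Fintype.card ι), X ^ a * C (z i) ^ (Fintype.card ι - 1 - a) := by
  refine (monic_X_sub_C (z i)).isRegular.left ?_
  calc (X - C (z i)) * ∏ j ∈ Finset.univ.erase i, (X - C (z j))
      = X ^ Fintype.card ι - C (z i) ^ Fintype.card ι := by
        rw [Finset.mul_prod_erase _ (fun j => X - C (z j)) (Finset.mem_univ i), hz, ← C_pow,
          pow_card_eq_zero_of_prod_X_sub_C_eq_X_pow hz, C_0, sub_zero]
    _ = (X - C (z i)) * ∑ a ∈ Finset.range (Fintype.card ι),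
          X ^ a * C (z i) ^ (Fintype.card ι - 1 - a) := by
        rw [mul_comm, geom_sum₂_mul]

theorem pow_card_pred_mul_pow_card_pred_eq_zero_of_prod_X_sub_C_eq_X_pow
    (hz : ∏ i, (X - C (z i)) = X ^ Fintype.card ι) {i j : ι} (hij : i ≠ j) :
    z i ^ (Fintype.card ι - 1) * z j ^ (Fintype.card ι - 1) = 0 := by
  classical
  set N := Fintype.card ι
  have hgeom : ∑ a ∈ Finset.range N, z j ^ a * z i ^ (N - 1 - a) = 0 := by
    simpa [eval_prod, eval_finsetSum,
      Finset.prod_eq_zero (Finset.mem_erase.2 ⟨hij.symm, Finset.mem_univ j⟩)] using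
      (congrArg (eval (z j))
        (prod_erase_X_sub_C_eq_geom_sum_of_prod_X_sub_C_eq_X_pow hz i)).symm
  have hN : 1 ≤ N := Fintype.card_pos_iff.2 ⟨i⟩
  calc z i ^ (N - 1) * z j ^ (N - 1)
      = (∑ a ∈ Finset.range N, z j ^ a * z i ^ (N - 1 - a)) * z i ^ (N - 1) := by
        rw [Finset.sum_mul, Finset.sum_eq_single (N - 1)]
        · rw [Nat.sub_self, pow_zero, mul_one, mul_comm]
        · intro a ha hne
          rw [mul_assoc, ← pow_add, pow_eq_zero_of_le (by simp at ha; omega)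
            (pow_card_eq_zero_of_prod_X_sub_C_eq_X_pow hz i), mul_zero]
        · exact fun h => absurd (Finset.mem_range.2 (by omega)) h
    _ = 0 := by rw [hgeom, zero_mul]

theorem sum_mul_pow_card_pred_pow_succ_eq_zero {u : ι → A} {m : ℕ}
    (hu : ∀ i, u i ^ (m + 1) = 0) (hz : ∏ i, (X - C (z i)) = X ^ Fintype.card ι) :
    (∑ i, u i * z i ^ (Fintype.card ι - 1)) ^ (m + 1) = 0 := by
  rw [Finset.sum_pow_succ_of_pairwise_mul_eq_zero]
  · exact Finset.sum_eq_zero fun i _ => by rw [mul_pow, hu i, zero_mul]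
  · intro i _ j _ hij
    calc u i * z i ^ (Fintype.card ι - 1) * (u j * z j ^ (Fintype.card ι - 1))
        = u i * u j * (z i ^ (Fintype.card ι - 1) * z j ^ (Fintype.card ι - 1)) := by ring
      _ = 0 := by
        rw [pow_card_pred_mul_pow_card_pred_eq_zero_of_prod_X_sub_C_eq_X_pow hz hij, mul_zero]

end Polynomial

theorem Ideal.sum_mul_pow_card_pred_pow_succ_mem {R A ι : Type*} [CommSemiring R] [CommRing A]
    [Algebra R A] [Fintype ι] (I : Ideal A) {u z : ι → A} {m : ℕ}
    (hu : ∀ i, u i ^ (m + 1) ∈ I)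
    (hz : ∀ k, 1 ≤ k → k ≤ Fintype.card ι → aeval z (esymm ι R k) ∈ I) :
    (∑ i, u i * z i ^ (Fintype.card ι - 1)) ^ (m + 1) ∈ I := by
  let π := Ideal.Quotient.mkₐ R I
  have hπu : ∀ i, π (u i) ^ (m + 1) = 0 := fun i => by
    rw [← map_pow, Ideal.Quotient.mkₐ_eq_mk, Ideal.Quotient.eq_zero_iff_mem]
    exact hu i
  have hπz : ∀ k, 1 ≤ k → k ≤ Fintype.card ι →
      (Finset.univ.val.map fun i => π (z i)).esymm k = 0 := fun k hk hkι => by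
    rw [← aeval_esymm_eq_multiset_esymm ι R, ← MvPolynomial.comp_aeval, AlgHom.comp_apply,
      Ideal.Quotient.mkₐ_eq_mk, Ideal.Quotient.eq_zero_iff_mem]
    exact hz k hk hkι
  have hprod : ∏ i, (Polynomial.X - Polynomial.C (π (z i))) =
      Polynomial.X ^ Fintype.card ι := by
    have := Polynomial.prod_X_sub_C_eq_X_pow_of_esymm_eq_zero
      (Finset.univ.val.map fun i => π (z i)) (by simpa using hπz)
    rwa [Multiset.map_map, Multiset.card_map, Finset.card_val, Finset.card_univ] at this
  rw [← Ideal.Quotient.eq_zero_iff_mem, ← Ideal.Quotient.mkₐ_eq_mk R, map_pow, map_sum]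
  simp only [map_mul, map_pow]
  exact Polynomial.sum_mul_pow_card_pred_pow_succ_eq_zero hπu hprod

theorem ft_power_mem_ideal (n l : ℕ) :
    (∑ i : Fin n, X (Sum.inl i) * X (Sum.inr i) ^ (n - 1)) ^ (l + 1) ∈
      Ideal.span
        ((Set.range fun i : Fin n =>
            (X (Sum.inl i) : MvPolynomial (Fin n ⊕ Fin n) ℂ) ^ (l + 1)) ∪
          {p : MvPolynomial (Fin n ⊕ Fin n) ℂ | ∃ k : ℕ, 1 ≤ k ∧ k ≤ n ∧ p = esymmZ n k}) := by
  rw [show n - 1 = Fintype.card (Fin n) - 1 by rw [Fintype.card_fin]]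
  refine Ideal.sum_mul_pow_card_pred_pow_succ_mem (R := ℂ) _
    (fun i => Ideal.subset_span (Or.inl ⟨i, rfl⟩))
    fun k hk hkn => Ideal.subset_span (Or.inr ⟨k, hk, by simpa using hkn, ?_⟩)
  rw [esymmZ, rename_eq_aeval]
  rfl
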